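/- arXiv:0712.2857 — 5 statements merged into one kernel-verified Lean document; each statement's English description precedes it below -/
import Mathlib

section
/- For every real ε > 0 there exist a real δ > 0 and an integer N such that for all integers n ≥ N and all integers k with 0 < k and k² ≤ δ·n, the single-exclusion number satisfies S(n, n−k−1) ≤ (1+ε)·(1/k)·binom(n,k), where binom(n,k) denotes the binomial coefficient. (That is, S(n,n−k−1) ≤ (1+o(1))·(1/k)·binom(n,k) as n → ∞ whenever k = o(√n).) -/
/-- An `(n,t)`-single-exclusion system: a collection of `t`-subsets (blocks) of an
`n`-set such that every subset `X` with `1 ≤ |X| ≤ t+1` has a block containing all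
but exactly one element of `X`. -/
def IsSESystem (n t : ℕ) (S : Finset (Finset (Fin n))) : Prop :=
  (∀ B ∈ S, B.card = t) ∧
  ∀ X : Finset (Fin n), 1 ≤ X.card → X.card ≤ t + 1 → ∃ B ∈ S, (X \ B).card = 1

/-- The `(n,t)`-single-exclusion number `S(n,t)`: the least number of blocks in an
`(n,t)`-single-exclusion system. -/
noncomputable def SENumber (n t : ℕ) : ℕ :=
  sInf {m : ℕ | ∃ S : Finset (Finset (Fin n)), IsSESystem n t S ∧ S.card = m}

open Finset

namespace SEaux




/-- completion value: the canonical `x` with `sum L + x ≡ 0 (mod m)`, `x < m`. -/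
def xval (m : ℕ) (L : Finset ℕ) : ℕ := (m - (L.sum id) % m) % m

lemma xval_lt {m : ℕ} (hm : 0 < m) (L : Finset ℕ) : xval m L < m :=
  Nat.mod_lt _ hm

/-- uniqueness of the completion value -/
lemma mod_key {m c z : ℕ} (hm : 0 < m) (h : (c + z) % m = 0) (hz : z < m) :
    z = (m - c % m) % m := by
  have hr : c % m < m := Nat.mod_lt _ hm
  set r := c % m with hrdef
  have h2 : (r + z) % m = 0 := by
    rw [Nat.add_mod] at h
    rwa [Nat.mod_eq_of_lt hz, ← hrdef] at h
  rcases Nat.lt_or_ge (r + z) m with hlt | hge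
  · rw [Nat.mod_eq_of_lt hlt] at h2
    have hr0 : r = 0 := by omega
    have hz0 : z = 0 := by omega
    rw [hr0, hz0]
    simp
  · have h3 : (r + z - m) % m = 0 := by rwa [Nat.mod_eq_sub_mod hge] at h2
    have h4 : r + z - m < m := by omega
    rw [Nat.mod_eq_of_lt h4] at h3
    have h5 : z = m - r := by omega
    have hrpos : 0 < r := by omega
    rw [h5, Nat.mod_eq_of_lt (by omega)]

lemma xval_spec {m : ℕ} (hm : 0 < m) (L : Finset ℕ) :
    (L.sum id + xval m L) % m = 0 := by
  unfold xval
  have hr : L.sum id % m < m := Nat.mod_lt _ hm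
  set r := L.sum id % m with hrdef
  rcases Nat.eq_zero_or_pos r with hr0 | hrpos
  · rw [hr0]
    simp only [Nat.sub_zero, Nat.mod_self, Nat.add_zero]
    simpa [id] using (hr0.symm.trans hrdef).symm
  · rw [Nat.mod_eq_of_lt (show m - r < m by omega)]
    rw [Nat.add_mod, ← hrdef, Nat.mod_eq_of_lt (show m - r < m by omega)]
    have : r + (m - r) = m := by omega
    rw [this]
    simp

lemma xval_unique {m y : ℕ} (hm : 0 < m) (L : Finset ℕ) (hy : y < m)
    (h : (L.sum id + y) % m = 0) : xval m L = y :=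
  (mod_key hm h hy).symm


/-- the "good" (k-1)-subsets of `range m`: completion lands outside -/
def goodS (k m : ℕ) : Finset (Finset ℕ) :=
  ((range m).powersetCard (k-1)).filter (fun L => xval m L ∉ L)

/-- the "bad" (k-1)-subsets -/
def badS (k m : ℕ) : Finset (Finset ℕ) :=
  ((range m).powersetCard (k-1)).filter (fun L => xval m L ∈ L)

/-- main block map -/
def Fb (m : ℕ) (L : Finset ℕ) : Finset ℕ := insert (xval m L) L

/-- patch block map -/
noncomputable def pb (m : ℕ) (L : Finset ℕ) : Finset ℕ :=
  insert (if h : (range m \ L).Nonempty then (range m \ L).min' h else 0) L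

/-- stage-m family of k-subsets of `range m` covering all (k-1)-subsets -/
noncomputable def AA (k m : ℕ) : Finset (Finset ℕ) :=
  ((goodS k m).image (Fb m)) ∪ ((badS k m).image (pb m)) ∪ {range k}

/-- the full family of (k+1)-subsets of `range n` -/
noncomputable def HH (k n : ℕ) : Finset (Finset ℕ) :=
  (Finset.Ico k n).biUnion (fun m => (AA k m).image (insert m))

lemma AA_props {k m : ℕ} (hk : 1 ≤ k) (hm : k ≤ m) :
    ∀ A ∈ AA k m, A ⊆ range m ∧ A.card = k := by
  intro A hA
  have hm1 : 0 < m := by omega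
  rcases Finset.mem_union.1 hA with hA | hroot
  · rcases Finset.mem_union.1 hA with hg | hb
    · obtain ⟨L, hL, rfl⟩ := Finset.mem_image.1 hg
      rw [goodS, Finset.mem_filter, Finset.mem_powersetCard] at hL
      obtain ⟨⟨hLsub, hLcard⟩, hLx⟩ := hL
      constructor
      · intro x hx
        rcases Finset.mem_insert.1 hx with rfl | hx
        · exact Finset.mem_range.2 (xval_lt hm1 L)
        · exact hLsub hx
      · rw [Fb, Finset.card_insert_of_notMem hLx, hLcard]; omega
    · obtain ⟨L, hL, rfl⟩ := Finset.mem_image.1 hb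
      rw [badS, Finset.mem_filter, Finset.mem_powersetCard] at hL
      obtain ⟨⟨hLsub, hLcard⟩, _⟩ := hL
      have hne : (range m \ L).Nonempty := by
        apply Finset.card_pos.1
        rw [Finset.card_sdiff_of_subset hLsub, Finset.card_range, hLcard]
        omega
      rw [pb, dif_pos hne]
      have hmem := Finset.min'_mem _ hne
      rw [Finset.mem_sdiff] at hmem
      constructor
      · intro x hx
        rcases Finset.mem_insert.1 hx with rfl | hx
        · exact hmem.1
        · exact hLsub hx
      · rw [Finset.card_insert_of_notMem hmem.2, hLcard]; omega
  · rw [Finset.mem_singleton] at hroot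
    subst hroot
    exact ⟨Finset.range_subset_range.2 hm, Finset.card_range k⟩

lemma AA_covers {k m : ℕ} (L : Finset ℕ) (hL : L ⊆ range m) (hLcard : L.card = k - 1) :
    ∃ A ∈ AA k m, L ⊆ A := by
  have hLmem : L ∈ (range m).powersetCard (k-1) :=
    Finset.mem_powersetCard.2 ⟨hL, hLcard⟩
  by_cases hx : xval m L ∈ L
  · refine ⟨pb m L, ?_, ?_⟩
    · exact Finset.mem_union.2 (Or.inl (Finset.mem_union.2 (Or.inr
        (Finset.mem_image_of_mem _ (Finset.mem_filter.2 ⟨hLmem, hx⟩)))))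
    · exact Finset.subset_insert _ _
  · refine ⟨Fb m L, ?_, ?_⟩
    · exact Finset.mem_union.2 (Or.inl (Finset.mem_union.2 (Or.inl
        (Finset.mem_image_of_mem _ (Finset.mem_filter.2 ⟨hLmem, hx⟩)))))
    · exact Finset.subset_insert _ _

lemma root_mem_AA {k m : ℕ} : range k ∈ AA k m :=
  Finset.mem_union.2 (Or.inr (Finset.mem_singleton_self _))

lemma HH_blocks {k n : ℕ} (hk : 1 ≤ k) :
    ∀ C ∈ HH k n, C ⊆ range n ∧ C.card = k + 1 := by
  intro C hC
  rcases Finset.mem_biUnion.1 hC with ⟨m, hm, hmem⟩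
  rcases Finset.mem_image.1 hmem with ⟨A, hA, rfl⟩
  rw [Finset.mem_Ico] at hm
  obtain ⟨hAsub, hAcard⟩ := AA_props hk hm.1 A hA
  have hmA : m ∉ A := fun h => by simpa using Finset.mem_range.1 (hAsub h)
  constructor
  · intro x hx
    rcases Finset.mem_insert.1 hx with rfl | hx
    · exact Finset.mem_range.2 hm.2
    · exact Finset.range_subset_range.2 (le_of_lt hm.2) (hAsub hx)
  · rw [Finset.card_insert_of_notMem hmA, hAcard]
/-- the root case: range k sits inside the complement of X -/
lemma cover_root {k n : ℕ} (hkn : k + 1 ≤ n)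
    (X : Finset ℕ) (hXsub : X ⊆ range n) (hX1 : X.Nonempty)
    (hKX : ∀ x ∈ range k, x ∉ X) : ∃ C ∈ HH k n, (X ∩ C).card = 1 := by
  obtain ⟨v, hv⟩ := hX1
  have hvn : v < n := Finset.mem_range.1 (hXsub hv)
  have hvk : k ≤ v := by
    by_contra h
    exact hKX v (Finset.mem_range.2 (by omega)) hv
  refine ⟨insert v (range k), ?_, ?_⟩
  · apply Finset.mem_biUnion.2
    exact ⟨v, Finset.mem_Ico.2 ⟨hvk, hvn⟩, Finset.mem_image_of_mem _ root_mem_AA⟩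
  · have : X ∩ insert v (range k) = {v} := by
      ext x
      simp only [Finset.mem_inter, Finset.mem_insert, Finset.mem_range,
        Finset.mem_singleton]
      constructor
      · rintro ⟨hxX, rfl | hxk⟩
        · rfl
        · exact absurd hxX (hKX x (Finset.mem_range.2 hxk))
      · rintro rfl
        exact ⟨hv, Or.inl rfl⟩
    rw [this, Finset.card_singleton]

/-- key induction: from any k-set inside the complement of X we find a block
of the family meeting X exactly once -/
lemma cover_aux {k n : ℕ} (hk : 1 ≤ k) (hkn : k + 1 ≤ n)
    (X : Finset ℕ) (hXsub : X ⊆ range n) (hX1 : X.Nonempty) :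
    ∀ μ : ℕ, ∀ K : Finset ℕ, K ⊆ range n → K.card = k → (∀ x ∈ K, x ∉ X) →
      (∀ x ∈ K, x ≤ μ) → ∃ C ∈ HH k n, (X ∩ C).card = 1 := by
  intro μ
  induction μ with
  | zero =>
    intro K hKsub hKcard hKX hKbound
    have hsub1 : K ⊆ range 1 := by
      intro x hx
      exact Finset.mem_range.2 (by have := hKbound x hx; omega)
    have hk1 : k ≤ 1 := by
      have := Finset.card_le_card hsub1
      rw [hKcard, Finset.card_range] at this
      exact this
    have hkeq : k = 1 := le_antisymm hk1 hk
    have hKr : K = range k := by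
      apply Finset.eq_of_subset_of_card_le
      · rw [hkeq]; exact hsub1
      · rw [Finset.card_range, hKcard]
    apply cover_root hkn X hXsub hX1
    rw [← hKr]
    exact hKX
  | succ ν ih =>
    intro K hKsub hKcard hKX hKbound
    by_cases hcase : ∀ x ∈ K, x < k
    · have hKr : K = range k := by
        apply Finset.eq_of_subset_of_card_le
        · intro x hx; exact Finset.mem_range.2 (hcase x hx)
        · rw [Finset.card_range, hKcard]
      apply cover_root hkn X hXsub hX1
      rw [← hKr]
      exact hKX
    · push_neg at hcase
      obtain ⟨z, hzK, hzk⟩ := hcase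
      have hKne : K.Nonempty := Finset.card_pos.1 (by omega)
      set m := K.max' hKne with hm
      have hmK : m ∈ K := K.max'_mem hKne
      have hkm : k ≤ m := le_trans hzk (K.le_max' z hzK)
      have hmn : m < n := Finset.mem_range.1 (hKsub hmK)
      have hmν : m ≤ ν + 1 := hKbound m hmK
      set L := K.erase m with hL
      have hLsub : L ⊆ range m := by
        intro x hx
        have hx1 : x ∈ K := Finset.mem_of_mem_erase hx
        have hx2 : x ≠ m := Finset.ne_of_mem_erase hx
        have hx3 : x ≤ m := K.le_max' x hx1
        exact Finset.mem_range.2 (by omega)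
      have hLcard : L.card = k - 1 := by
        rw [hL, Finset.card_erase_of_mem hmK, hKcard]
      obtain ⟨A, hA, hLA⟩ := AA_covers L hLsub hLcard
      obtain ⟨hAsub, hAcard⟩ := AA_props hk hkm A hA
      have hALcard : (A \ L).card = 1 := by
        rw [Finset.card_sdiff_of_subset hLA, hAcard, hLcard]; omega
      obtain ⟨w, hw⟩ := Finset.card_eq_one.1 hALcard
      have hwA : w ∈ A ∧ w ∉ L := by
        have : w ∈ A \ L := hw ▸ Finset.mem_singleton_self w
        exact Finset.mem_sdiff.1 this
      have hAchar : ∀ x, x ∈ A ↔ (x ∈ L ∨ x = w) := by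
        intro x
        constructor
        · intro hx
          by_cases hxL : x ∈ L
          · exact Or.inl hxL
          · right
            have : x ∈ A \ L := Finset.mem_sdiff.2 ⟨hx, hxL⟩
            rw [hw] at this
            exact Finset.mem_singleton.1 this
        · rintro (hx | rfl)
          · exact hLA hx
          · exact hwA.1
      have hCmem : insert m A ∈ HH k n := by
        apply Finset.mem_biUnion.2
        exact ⟨m, Finset.mem_Ico.2 ⟨hkm, hmn⟩, Finset.mem_image_of_mem _ hA⟩
      by_cases hwX : w ∈ X
      · refine ⟨insert m A, hCmem, ?_⟩
        have : X ∩ insert m A = {w} := by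
          ext x
          simp only [Finset.mem_inter, Finset.mem_insert, Finset.mem_singleton]
          constructor
          · rintro ⟨hxX, rfl | hxA⟩
            · exact absurd hxX (hKX m hmK)
            · rcases (hAchar x).1 hxA with hxL | rfl
              · exact absurd hxX (hKX x (Finset.mem_of_mem_erase hxL))
              · rfl
          · rintro rfl
            exact ⟨hwX, Or.inr hwA.1⟩
        rw [this, Finset.card_singleton]
      · -- recurse with A
        apply ih A
        · intro x hx
          have : x < m := Finset.mem_range.1 (hAsub hx)
          exact Finset.mem_range.2 (by omega)
        · exact hAcard
        · intro x hx
          rcases (hAchar x).1 hx with hxL | rfl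
          · exact hKX x (Finset.mem_of_mem_erase hxL)
          · exact hwX
        · intro x hx
          have : x < m := Finset.mem_range.1 (hAsub hx)
          omega
lemma Fb_block {k m : ℕ} (hk : 1 ≤ k) (hm : k ≤ m) {L : Finset ℕ}
    (hL : L ∈ goodS k m) :
    Fb m L ⊆ range m ∧ (Fb m L).card = k ∧ (Fb m L).sum id % m = 0 := by
  have hm1 : 0 < m := by omega
  rw [goodS, Finset.mem_filter, Finset.mem_powersetCard] at hL
  obtain ⟨⟨hLsub, hLcard⟩, hLx⟩ := hL
  refine ⟨?_, ?_, ?_⟩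
  · intro x hx
    rcases Finset.mem_insert.1 hx with rfl | hx
    · exact Finset.mem_range.2 (xval_lt hm1 L)
    · exact hLsub hx
  · rw [Fb, Finset.card_insert_of_notMem hLx, hLcard]; omega
  · rw [Fb, Finset.sum_insert hLx]
    have := xval_spec hm1 L
    rw [Nat.add_comm] at this
    simpa using this

lemma erase_good {k m : ℕ} (hk : 1 ≤ k) (hm : k ≤ m) {B : Finset ℕ}
    (hBsub : B ⊆ range m) (hBcard : B.card = k) (hBsum : B.sum id % m = 0)
    {y : ℕ} (hy : y ∈ B) :
    B.erase y ∈ goodS k m ∧ Fb m (B.erase y) = B := by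
  have hm1 : 0 < m := by omega
  have hym : y < m := Finset.mem_range.1 (hBsub hy)
  have hsum : (B.erase y).sum id + y = B.sum id := by
    simpa using Finset.sum_erase_add B id hy
  have hxv : xval m (B.erase y) = y := by
    apply xval_unique hm1 _ hym
    rw [hsum]; exact hBsum
  constructor
  · rw [goodS, Finset.mem_filter, Finset.mem_powersetCard]
    refine ⟨⟨fun x hx => hBsub (Finset.mem_of_mem_erase hx), ?_⟩, ?_⟩
    · rw [Finset.card_erase_of_mem hy, hBcard]
    · rw [hxv]; exact Finset.notMem_erase y B
  · rw [Fb, hxv, Finset.insert_erase hy]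

lemma k_mul_imageF {k m : ℕ} (hk : 1 ≤ k) (hm : k ≤ m) :
    k * ((goodS k m).image (Fb m)).card ≤ (goodS k m).card := by
  have hmaps : ∀ L ∈ goodS k m, Fb m L ∈ (goodS k m).image (Fb m) :=
    fun L hL => Finset.mem_image_of_mem _ hL
  rw [Finset.card_eq_sum_card_fiberwise hmaps]
  have hbound : ∀ B ∈ (goodS k m).image (Fb m),
      k ≤ ((goodS k m).filter (fun L => Fb m L = B)).card := by
    intro B hB
    obtain ⟨L₀, hL₀, rfl⟩ := Finset.mem_image.1 hB
    obtain ⟨hBsub, hBcard, hBsum⟩ := Fb_block hk hm hL₀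
    set B := Fb m L₀
    have hsubset : B.image (fun y => B.erase y) ⊆
        (goodS k m).filter (fun L => Fb m L = B) := by
      intro L hL
      obtain ⟨y, hy, rfl⟩ := Finset.mem_image.1 hL
      obtain ⟨h1, h2⟩ := erase_good hk hm hBsub hBcard hBsum hy
      exact Finset.mem_filter.2 ⟨h1, h2⟩
    have himg : (B.image (fun y => B.erase y)).card = k := by
      rw [Finset.card_image_of_injOn (Finset.erase_injOn B), hBcard]
    calc k = (B.image (fun y => B.erase y)).card := himg.symm
    _ ≤ _ := Finset.card_le_card hsubset
  calc k * ((goodS k m).image (Fb m)).card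
      = ((goodS k m).image (Fb m)).card • k := by rw [smul_eq_mul, Nat.mul_comm]
  _ ≤ _ := Finset.card_nsmul_le_sum _ _ _ hbound
lemma badS_card {k m : ℕ} (hk : 2 ≤ k) (hm : 1 ≤ m) :
    (badS k m).card ≤ 2 * m.choose (k-2) := by
  have hm1 : 0 < m := hm
  set ψ : Finset ℕ → Finset ℕ := fun L => L.erase (xval m L) with hψ
  have hmaps : ∀ L ∈ badS k m, ψ L ∈ (range m).powersetCard (k-2) := by
    intro L hL
    rw [badS, Finset.mem_filter, Finset.mem_powersetCard] at hL
    obtain ⟨⟨hLsub, hLcard⟩, hLx⟩ := hL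
    rw [Finset.mem_powersetCard]
    constructor
    · exact fun x hx => hLsub (Finset.mem_of_mem_erase hx)
    · rw [Finset.card_erase_of_mem hLx, hLcard]; omega
  rw [Finset.card_eq_sum_card_fiberwise hmaps]
  have hbound : ∀ L'' ∈ (range m).powersetCard (k-2),
      ((badS k m).filter (fun L => ψ L = L'')).card ≤ 2 := by
    intro L'' _
    set s' := (badS k m).filter (fun L => ψ L = L'') with hs'
    set c := L''.sum id with hc
    set t₀ := (m - c % m) % m with ht₀
    -- every L in the fiber has 2 * xval m L ∈ {t₀, m + t₀}
    have hkey : ∀ L ∈ s', 2 * xval m L = t₀ ∨ 2 * xval m L = m + t₀ := by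
      intro L hL
      rw [hs', Finset.mem_filter] at hL
      obtain ⟨hLbad, hLψ⟩ := hL
      rw [badS, Finset.mem_filter] at hLbad
      obtain ⟨_, hLx⟩ := hLbad
      set y := xval m L with hy
      have hym : y < m := xval_lt hm1 L
      have hsum : c + y = L.sum id := by
        rw [hc, ← hLψ, hψ]
        simpa using Finset.sum_erase_add L id hLx
      have h0 : (L.sum id + y) % m = 0 := xval_spec hm1 L
      have h1 : (c + 2 * y) % m = 0 := by
        have : c + 2 * y = L.sum id + y := by omega
        rw [this]; exact h0
      have h2 : ((2 * y) % m) = t₀ := by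
        rw [ht₀]
        apply (mod_key hm1 ?_ (Nat.mod_lt _ hm1)).symm.symm
        rwa [Nat.add_mod_mod]
      have hq : 2 * y / m < 2 := (Nat.div_lt_iff_lt_mul hm1).2 (by omega)
      have hdm := Nat.div_add_mod (2 * y) m
      rw [h2] at hdm
      interval_cases h : (2 * y / m)
      · left; omega
      · right; omega
    -- the map L ↦ 2 * xval m L is injective on the fiber
    have hinj : Set.InjOn (fun L => 2 * xval m L) s' := by
      intro L1 hL1 L2 hL2 heq
      have hL1' := Finset.mem_coe.1 hL1
      have hL2' := Finset.mem_coe.1 hL2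
      rw [hs', Finset.mem_filter, badS, Finset.mem_filter] at hL1' hL2'
      obtain ⟨⟨_, hx1⟩, hψ1⟩ := hL1'
      obtain ⟨⟨_, hx2⟩, hψ2⟩ := hL2'
      simp only at heq
      have hx : xval m L1 = xval m L2 := by omega
      calc L1 = insert (xval m L1) (ψ L1) := by
              rw [hψ]; simp [Finset.insert_erase hx1]
      _ = insert (xval m L2) (ψ L2) := by rw [hx, hψ1, hψ2]
      _ = L2 := by rw [hψ]; simp [Finset.insert_erase hx2]
    have himg : s'.card = (s'.image (fun L => 2 * xval m L)).card :=
      (Finset.card_image_of_injOn hinj).symm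
    have hsub : s'.image (fun L => 2 * xval m L) ⊆ ({t₀, m + t₀} : Finset ℕ) := by
      intro v hv
      obtain ⟨L, hL, rfl⟩ := Finset.mem_image.1 hv
      rcases hkey L hL with h | h <;> simp [h]
    calc s'.card = _ := himg
    _ ≤ ({t₀, m + t₀} : Finset ℕ).card := Finset.card_le_card hsub
    _ ≤ 2 := Finset.card_insert_le _ _ |>.trans (by simp)
  calc ∑ L'' ∈ (range m).powersetCard (k-2),
        ((badS k m).filter (fun L => ψ L = L'')).card
      ≤ ∑ _L'' ∈ (range m).powersetCard (k-2), 2 := Finset.sum_le_sum hbound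
  _ = 2 * m.choose (k-2) := by
      rw [Finset.sum_const, Finset.card_powersetCard, Finset.card_range,
        smul_eq_mul, Nat.mul_comm]
lemma AA_card_ge2 {k m : ℕ} (hk : 2 ≤ k) (hm : k ≤ m) :
    k * (AA k m).card ≤ m.choose (k-1) + 2 * k * m.choose (k-2) + k := by
  have h1 : (AA k m).card ≤
      ((goodS k m).image (Fb m)).card + (badS k m).card + 1 := by
    rw [AA]
    have ha := Finset.card_union_le
      (((goodS k m).image (Fb m)) ∪ ((badS k m).image (pb m)))
      ({range k} : Finset (Finset ℕ))
    have hb := Finset.card_union_le ((goodS k m).image (Fb m)) ((badS k m).image (pb m))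
    have hc : ((badS k m).image (pb m)).card ≤ (badS k m).card := Finset.card_image_le
    simp only [Finset.card_singleton] at ha
    omega
  have h2 : k * ((goodS k m).image (Fb m)).card ≤ m.choose (k-1) := by
    calc k * ((goodS k m).image (Fb m)).card ≤ (goodS k m).card :=
          k_mul_imageF (by omega) hm
    _ ≤ ((range m).powersetCard (k-1)).card := Finset.card_le_card (Finset.filter_subset _ _)
    _ = m.choose (k-1) := by rw [Finset.card_powersetCard, Finset.card_range]
  have h3 : (badS k m).card ≤ 2 * m.choose (k-2) := badS_card hk (by omega)
  have hmul := Nat.mul_le_mul_left k h1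
  have h3' := Nat.mul_le_mul_left k h3
  have hexp : k * (((goodS k m).image (Fb m)).card + (badS k m).card + 1)
      = k * ((goodS k m).image (Fb m)).card + k * (badS k m).card + k := by ring
  have h3'' : k * (2 * m.choose (k-2)) = 2 * k * m.choose (k-2) := by ring
  omega

lemma AA_card_one {m : ℕ} (hm : 1 ≤ m) : (AA 1 m).card = 1 := by
  have hx0 : xval m ∅ = 0 := by
    unfold xval
    simp
  have hgood : goodS 1 m = {∅} := by
    unfold goodS
    rw [show (1:ℕ) - 1 = 0 from rfl, Finset.powersetCard_zero, Finset.filter_singleton]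
    simp
  have hbad : badS 1 m = ∅ := by
    unfold badS
    rw [show (1:ℕ) - 1 = 0 from rfl, Finset.powersetCard_zero, Finset.filter_singleton]
    simp
  have : AA 1 m = {range 1} := by
    unfold AA
    rw [hgood, hbad]
    simp only [Finset.image_singleton, Finset.image_empty, Finset.union_empty]
    rw [Fb, hx0]
    have : insert 0 (∅ : Finset ℕ) = range 1 := by
      rw [Finset.range_one]; rfl
    rw [this, Finset.union_idempotent]
  rw [this, Finset.card_singleton]

lemma HH_card_le {k n : ℕ} :
    (HH k n).card ≤ ∑ m ∈ Finset.Ico k n, (AA k m).card := by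
  calc (HH k n).card ≤ ∑ m ∈ Finset.Ico k n, ((AA k m).image (insert m)).card :=
        Finset.card_biUnion_le
  _ ≤ _ := Finset.sum_le_sum (fun m _ => Finset.card_image_le)

lemma hockey {n j : ℕ} (hj : 1 ≤ j) (hn : 1 ≤ n) :
    ∑ m ∈ Finset.Ico j n, m.choose (j-1) ≤ n.choose j := by
  have hsub : Finset.Ico j n ⊆ Finset.Icc (j-1) (n-1) := by
    intro x hx
    rw [Finset.mem_Ico] at hx
    rw [Finset.mem_Icc]
    omega
  calc ∑ m ∈ Finset.Ico j n, m.choose (j-1)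
      ≤ ∑ m ∈ Finset.Icc (j-1) (n-1), m.choose (j-1) :=
        Finset.sum_le_sum_of_subset hsub
  _ = ((n-1)+1).choose ((j-1)+1) := Nat.sum_Icc_choose _ _
  _ = n.choose j := by congr 1 <;> omega

lemma HH_card_one {n : ℕ} (hn : 1 ≤ n) : (HH 1 n).card ≤ n := by
  calc (HH 1 n).card ≤ ∑ m ∈ Finset.Ico 1 n, (AA 1 m).card := HH_card_le
  _ = ∑ m ∈ Finset.Ico 1 n, 1 := by
      apply Finset.sum_congr rfl
      intro m hm
      exact AA_card_one (Finset.mem_Ico.1 hm).1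
  _ = n - 1 := by rw [Finset.sum_const, smul_eq_mul, Nat.mul_one, Nat.card_Ico]
  _ ≤ n := by omega

lemma HH_card_ge2 {k n : ℕ} (hk : 2 ≤ k) (hn : k + 1 ≤ n) :
    k * (HH k n).card ≤ n.choose k + 2 * k * n.choose (k-1) + k * n := by
  have h1 : k * (HH k n).card ≤ ∑ m ∈ Finset.Ico k n, (k * (AA k m).card) := by
    rw [← Finset.mul_sum]
    exact Nat.mul_le_mul_left k HH_card_le
  have h2 : ∑ m ∈ Finset.Ico k n, (k * (AA k m).card)
      ≤ ∑ m ∈ Finset.Ico k n, (m.choose (k-1) + 2 * k * m.choose (k-2) + k) := by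
    apply Finset.sum_le_sum
    intro m hm
    exact AA_card_ge2 hk (Finset.mem_Ico.1 hm).1
  have h3 : ∑ m ∈ Finset.Ico k n, (m.choose (k-1) + 2 * k * m.choose (k-2) + k)
      = (∑ m ∈ Finset.Ico k n, m.choose (k-1))
        + 2 * k * (∑ m ∈ Finset.Ico k n, m.choose (k-2))
        + k * (n - k) := by
    rw [Finset.sum_add_distrib, Finset.sum_add_distrib, ← Finset.mul_sum,
      Finset.sum_const, Nat.card_Ico, smul_eq_mul, Nat.mul_comm (n-k) k]
  have h4 : ∑ m ∈ Finset.Ico k n, m.choose (k-1) ≤ n.choose k :=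
    hockey (by omega) (by omega)
  have h5 : ∑ m ∈ Finset.Ico k n, m.choose (k-2) ≤ n.choose (k-1) := by
    have hsub : Finset.Ico k n ⊆ Finset.Ico (k-1) n := by
      intro x hx
      rw [Finset.mem_Ico] at hx ⊢
      omega
    calc ∑ m ∈ Finset.Ico k n, m.choose (k-2)
        ≤ ∑ m ∈ Finset.Ico (k-1) n, m.choose (k-2) :=
          Finset.sum_le_sum_of_subset hsub
    _ = ∑ m ∈ Finset.Ico (k-1) n, m.choose ((k-1)-1) := by
        apply Finset.sum_congr rfl
        intro m _
        congr 1
    _ ≤ n.choose (k-1) := hockey (by omega) (by omega)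
  calc k * (HH k n).card ≤ _ := h1
  _ ≤ _ := h2
  _ = _ := h3
  _ ≤ n.choose k + 2 * k * n.choose (k-1) + k * n := by
      have h6 : 2 * k * (∑ m ∈ Finset.Ico k n, m.choose (k-2)) ≤ 2 * k * n.choose (k-1) :=
        Nat.mul_le_mul_left _ h5
      have h7 : k * (n - k) ≤ k * n := Nat.mul_le_mul_left _ (by omega)
      omega
lemma HH_covers {k n : ℕ} (hk : 1 ≤ k) (hkn : k + 1 ≤ n)
    (X : Finset ℕ) (hXsub : X ⊆ range n) (hX1 : 1 ≤ X.card) (hX2 : X.card ≤ n - k) :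
    ∃ C ∈ HH k n, (X ∩ C).card = 1 := by
  have hY : k ≤ (range n \ X).card := by
    rw [Finset.card_sdiff_of_subset hXsub, Finset.card_range]
    omega
  obtain ⟨K, hKsub, hKcard⟩ := Finset.exists_subset_card_eq hY
  apply cover_aux hk hkn X hXsub (Finset.card_pos.1 hX1) n K
  · exact fun x hx => (Finset.mem_sdiff.1 (hKsub hx)).1
  · exact hKcard
  · exact fun x hx => (Finset.mem_sdiff.1 (hKsub hx)).2
  · intro x hx
    have := Finset.mem_range.1 (Finset.mem_sdiff.1 (hKsub hx)).1
    omega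

/-- convert a ℕ-finset into a `Fin n` finset -/
def conv (n : ℕ) (C : Finset ℕ) : Finset (Fin n) :=
  Finset.univ.filter (fun i => (i : ℕ) ∈ C)

lemma conv_card {n : ℕ} {C : Finset ℕ} (hC : C ⊆ range n) :
    (conv n C).card = C.card := by
  apply Finset.card_bij (fun (i : Fin n) _ => (i : ℕ))
  · intro i hi
    exact (Finset.mem_filter.1 hi).2
  · intro i hi j hj hij
    exact Fin.val_injective hij
  · intro a ha
    have han : a < n := Finset.mem_range.1 (hC ha)
    exact ⟨⟨a, han⟩, Finset.mem_filter.2 ⟨Finset.mem_univ _, ha⟩, rfl⟩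

lemma inter_conv_card {n : ℕ} (X : Finset (Fin n)) (C : Finset ℕ) :
    (X ∩ conv n C).card = (X.image (fun i : Fin n => (i : ℕ)) ∩ C).card := by
  apply Finset.card_bij (fun (i : Fin n) _ => (i : ℕ))
  · intro i hi
    rw [Finset.mem_inter] at hi
    exact Finset.mem_inter.2 ⟨Finset.mem_image_of_mem _ hi.1,
      (Finset.mem_filter.1 hi.2).2⟩
  · intro i _ j _ hij
    exact Fin.val_injective hij
  · intro a ha
    rw [Finset.mem_inter] at ha
    obtain ⟨i, hi, rfl⟩ := Finset.mem_image.1 ha.1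
    exact ⟨i, Finset.mem_inter.2 ⟨hi, Finset.mem_filter.2 ⟨Finset.mem_univ _, ha.2⟩⟩, rfl⟩

lemma SENumber_le_HH {k n : ℕ} (hk : 1 ≤ k) (hkn : k + 1 ≤ n) :
    SENumber n (n - k - 1) ≤ (HH k n).card := by
  set Sys := (HH k n).image (fun C => Finset.univ \ conv n C) with hSys
  have hSE : IsSESystem n (n - k - 1) Sys := by
    constructor
    · intro B hB
      obtain ⟨C, hC, rfl⟩ := Finset.mem_image.1 hB
      obtain ⟨hCsub, hCcard⟩ := HH_blocks hk C hC
      rw [Finset.card_sdiff_of_subset (Finset.subset_univ _), Finset.card_univ,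
        Fintype.card_fin, conv_card hCsub, hCcard]
      omega
    · intro X hX1 hX2
      set Xn := X.image (fun i : Fin n => (i : ℕ)) with hXn
      have hXncard : Xn.card = X.card :=
        Finset.card_image_of_injective _ Fin.val_injective
      have hXnsub : Xn ⊆ range n := by
        intro a ha
        obtain ⟨i, _, rfl⟩ := Finset.mem_image.1 ha
        exact Finset.mem_range.2 i.isLt
      have hX2' : Xn.card ≤ n - k := by
        rw [hXncard]
        omega
      obtain ⟨C, hC, hcard⟩ := HH_covers hk hkn Xn hXnsub (by omega) hX2'
      refine ⟨Finset.univ \ conv n C, Finset.mem_image_of_mem _ hC, ?_⟩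
      have hsd : X \ (Finset.univ \ conv n C) = X ∩ conv n C := by
        ext i
        simp [Finset.mem_sdiff, Finset.mem_inter]
      rw [hsd, inter_conv_card, ← hXn, hcard]
  calc SENumber n (n - k - 1) ≤ Sys.card := Nat.sInf_le ⟨Sys, hSE, rfl⟩
  _ ≤ (HH k n).card := Finset.card_image_le
lemma choose_step {n j : ℕ} (h : 2*j + 1 ≤ n) : n.choose j ≤ n.choose (j+1) := by
  have hid := Nat.choose_succ_right_eq n j
  have hle : n.choose j * (j+1) ≤ n.choose j * (n - j) :=
    Nat.mul_le_mul_left _ (by omega)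
  rw [← hid] at hle
  exact Nat.le_of_mul_le_mul_right hle (by omega)

lemma choose_two_le {n : ℕ} : ∀ j, 2 ≤ j → 2*j ≤ n → n.choose 2 ≤ n.choose j := by
  intro j
  induction j with
  | zero => intro h; omega
  | succ i ih =>
    intro h2 hn
    rcases Nat.lt_or_ge i 2 with hi | hi
    · have : i + 1 = 2 := by omega
      rw [this]
    · calc n.choose 2 ≤ n.choose i := ih hi (by omega)
      _ ≤ n.choose (i+1) := choose_step (by omega)

end SEaux

theorem stmt14 (ε : ℝ) (hε : 0 < ε) :
    ∃ δ : ℝ, 0 < δ ∧ ∃ N : ℕ, ∀ n : ℕ, N ≤ n → ∀ k : ℕ, 0 < k →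
      (k : ℝ) ^ 2 ≤ δ * n →
      (SENumber n (n - k - 1) : ℝ) ≤ (1 + ε) * (1 / (k : ℝ)) * (n.choose k : ℝ) := by
  classical
  set e := min 1 ε with he_def
  have he : 0 < e := lt_min one_pos hε
  have he1 : e ≤ 1 := min_le_left _ _
  have heε : e ≤ ε := min_le_right _ _
  have he2ε : e^2 ≤ ε := by nlinarith
  have he21 : e^2 ≤ 1 := by nlinarith
  refine ⟨e^2/64, by positivity, 1, ?_⟩
  intro n _hn k hk hkd
  have hk1 : 1 ≤ k := hk
  have hkk : k ≤ k^2 := Nat.le_self_pow (by omega) k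
  have hnn : (0:ℝ) ≤ (n:ℝ) := Nat.cast_nonneg n
  have h1R : (64:ℝ) * (k:ℝ)^2 ≤ e^2 * n := by nlinarith
  -- the basic size fact : 64 k² ≤ n
  have h64 : 64 * k^2 ≤ n := by
    have h2 : ((64 * k^2 : ℕ) : ℝ) ≤ (n:ℝ) := by
      push_cast
      nlinarith [mul_nonneg (sub_nonneg.2 he21) hnn]
    exact_mod_cast h2
  have hkn : k + 1 ≤ n := by omega
  have hn64 : 64 ≤ n := by
    have : 1 ≤ k^2 := by omega
    omega
  have h64k : 64 * k ≤ n := by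
    have : 64 * k ≤ 64 * k^2 := by omega
    omega
  have hkpos : (0:ℝ) < (k:ℝ) := by exact_mod_cast hk
  have hSE := SEaux.SENumber_le_HH hk1 hkn
  have hCnn : (0:ℝ) ≤ (n.choose k : ℝ) := Nat.cast_nonneg _
  have h64R : (64:ℝ) * (k:ℝ)^2 ≤ ε * n := by nlinarith
  have hkRn : (k:ℝ) ≤ (n:ℝ)/64 := by
    have : ((64 * k : ℕ):ℝ) ≤ (n:ℝ) := by exact_mod_cast h64k
    push_cast at this
    linarith
  rcases eq_or_lt_of_le hk1 with hk1' | hk2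
  · -- case k = 1
    subst hk1'
    have hHH : (SEaux.HH 1 n).card ≤ n := SEaux.HH_card_one (by omega)
    have hb : (SENumber n (n - 1 - 1) : ℝ) ≤ (n:ℝ) := by
      exact_mod_cast le_trans hSE hHH
    rw [Nat.choose_one_right]
    push_cast
    nlinarith
  · -- case 2 ≤ k
    have hk2' : 2 ≤ k := hk2
    have hcount := SEaux.HH_card_ge2 hk2' hkn
    have hnat : k * SENumber n (n - k - 1) ≤
        n.choose k + 2 * k * n.choose (k-1) + k * n :=
      le_trans (Nat.mul_le_mul_left k hSE) hcount
    have hcast : (k:ℝ) * (SENumber n (n - k - 1) : ℝ) ≤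
        (n.choose k : ℝ) + 2*(k:ℝ)*(n.choose (k-1) : ℝ) + (k:ℝ)*(n:ℝ) := by
      have h := (Nat.cast_le (α := ℝ)).2 hnat
      push_cast at h
      linarith
    -- identity : choose(n,k) * k = choose(n,k-1) * (n - k + 1)
    have hidn := Nat.choose_succ_right_eq n (k-1)
    rw [show k - 1 + 1 = k by omega] at hidn
    have hidR : (n.choose k : ℝ) * k
        = (n.choose (k-1) : ℝ) * ((n:ℝ) - ((k:ℝ) - 1)) := by
      have h1 : ((n.choose k * k : ℕ) : ℝ)
          = ((n.choose (k-1) * (n - (k-1)) : ℕ) : ℝ) := by rw [hidn]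
      rw [Nat.cast_mul, Nat.cast_mul,
        Nat.cast_sub (show k-1 ≤ n by omega), Nat.cast_sub hk1] at h1
      push_cast at h1
      linarith
    have hpos : (0:ℝ) < (n:ℝ) - ((k:ℝ) - 1) := by linarith
    -- (A) : 2 k choose(n,k-1) ≤ (ε/2) choose(n,k)
    have h4k2 : 4*(k:ℝ)^2 ≤ ε * ((n:ℝ) - ((k:ℝ) - 1)) := by
      have hn16 : (n:ℝ) ≤ 16 * ((n:ℝ) - ((k:ℝ) - 1)) := by linarith
      have hmul := mul_le_mul_of_nonneg_left hn16 (le_of_lt hε)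
      linarith
    have hA : 2*(k:ℝ)*(n.choose (k-1) : ℝ) ≤ (ε/2) * (n.choose k : ℝ) := by
      have hCnn' : (0:ℝ) ≤ (n.choose (k-1) : ℝ) := Nat.cast_nonneg _
      have key : (2*(k:ℝ)*(n.choose (k-1) : ℝ)) * ((n:ℝ) - ((k:ℝ) - 1)) ≤
          ((ε/2) * (n.choose k : ℝ)) * ((n:ℝ) - ((k:ℝ) - 1)) := by
        have hl : (2*(k:ℝ)*(n.choose (k-1) : ℝ)) * ((n:ℝ) - ((k:ℝ) - 1))
            = 2*(k:ℝ)*((n.choose k : ℝ)*(k:ℝ)) := by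
          rw [hidR]; ring
        rw [hl]
        have hmul := mul_le_mul_of_nonneg_left h4k2 hCnn
        linarith
      exact le_of_mul_le_mul_right key hpos
    -- (B) : k n ≤ (ε/2) choose(n,k)
    have hB : (k:ℝ) * n ≤ (ε/2) * (n.choose k : ℝ) := by
      have hmono : n.choose 2 ≤ n.choose k :=
        SEaux.choose_two_le k hk2' (by omega)
      have hc2 : ((n.choose 2 : ℕ) : ℝ) = (n:ℝ) * ((n:ℝ) - 1) / 2 :=
        Nat.cast_choose_two (K := ℝ) n
      have hmonoR : (n:ℝ) * ((n:ℝ) - 1) / 2 ≤ (n.choose k : ℝ) := by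
        rw [← hc2]
        exact_mod_cast hmono
      have h4kb : 4*(k:ℝ) ≤ ε * ((n:ℝ) - 1) := by
        have hkR2 : (k:ℝ) ≤ (k:ℝ)^2 := by exact_mod_cast hkk
        have hn2 : (2:ℝ) ≤ (n:ℝ) := by exact_mod_cast (show 2 ≤ n by omega)
        have hstep := mul_le_mul_of_nonneg_left
          (show (n:ℝ) ≤ 2*((n:ℝ)-1) by linarith) hε.le
        have hk2R : (0:ℝ) ≤ (k:ℝ)^2 := sq_nonneg _
        linarith
      have hp1 := mul_le_mul_of_nonneg_right h4kb hnn
      have hp2 := mul_le_mul_of_nonneg_left hmonoR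
        (show (0:ℝ) ≤ ε/2 by positivity)
      linarith
    -- combine
    have hfinal : (k:ℝ) * (SENumber n (n - k - 1) : ℝ)
        ≤ (1 + ε) * (n.choose k : ℝ) := by
      calc (k:ℝ) * (SENumber n (n - k - 1) : ℝ)
          ≤ (n.choose k : ℝ) + 2*(k:ℝ)*(n.choose (k-1) : ℝ) + (k:ℝ)*(n:ℝ) := hcast
      _ ≤ (n.choose k : ℝ) + (ε/2)*(n.choose k : ℝ) + (ε/2)*(n.choose k : ℝ) := by
          linarith
      _ = (1 + ε) * (n.choose k : ℝ) := by ring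
    rw [show (1 + ε) * (1/(k:ℝ)) * (n.choose k : ℝ)
        = ((1+ε)*(n.choose k : ℝ))/(k:ℝ) by ring]
    rw [le_div_iff₀ hkpos]
    linarith
end

section
/- For all integers n and t with 0 < t < n − 1, the single-exclusion number satisfies S(n,t) ≤ (1 − t/n)·T(n, t+1, t) + binom(n−1, t−1), where binom(n−1,t−1) denotes the binomial coefficient. -/
/-- An `(n,s,t)`-Turán system: a collection of `t`-subsets (blocks) of an `n`-set
such that every `s`-subset contains at least one block. -/
def IsTuranSystem (n s t : ℕ) (T : Finset (Finset (Fin n))) : Prop :=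
  (∀ B ∈ T, B.card = t) ∧
  ∀ X : Finset (Fin n), X.card = s → ∃ B ∈ T, B ⊆ X

/-- The `(n,s,t)`-Turán number `T(n,s,t)`: the least number of blocks in an
`(n,s,t)`-Turán system. -/
noncomputable def turanNumber (n s t : ℕ) : ℕ :=
  sInf {m : ℕ | ∃ T : Finset (Finset (Fin n)), IsTuranSystem n s t T ∧ T.card = m}

theorem stmt15 (n t : ℕ) (ht : 0 < t) (htn : t + 1 < n) :
    (SENumber n t : ℝ) ≤
      (1 - (t : ℝ) / (n : ℝ)) * (turanNumber n (t + 1) t : ℝ) +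
      ((n - 1).choose (t - 1) : ℝ) := by
  classical
  have hn : 0 < n := by omega
  have hcardU : (Finset.univ : Finset (Fin n)).card = n := by simp
  -- the Turán number is attained
  have hne : {m : ℕ | ∃ T : Finset (Finset (Fin n)),
      IsTuranSystem n (t+1) t T ∧ T.card = m}.Nonempty := by
    refine ⟨_, (Finset.univ : Finset (Fin n)).powersetCard t, ⟨?_, ?_⟩, rfl⟩
    · intro B hB; exact (Finset.mem_powersetCard.mp hB).2
    · intro X hX
      obtain ⟨B, hBX, hB⟩ := Finset.exists_subset_card_eq (n := t)
        (s := X) (by omega)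
      exact ⟨B, Finset.mem_powersetCard.mpr ⟨B.subset_univ, hB⟩, hBX⟩
  obtain ⟨T, hT, hTcard⟩ := Nat.sInf_mem hne
  -- degree function
  set d : Fin n → ℕ := fun x => (T.filter (fun B => x ∈ B)).card with hd_def
  have hsum : ∑ x : Fin n, d x = t * T.card := by
    have h1 : ∑ x : Fin n, d x = ∑ B ∈ T, B.card := by
      calc ∑ x : Fin n, d x
          = ∑ x : Fin n, ∑ B ∈ T, if x ∈ B then 1 else 0 := by
            simp only [hd_def, Finset.card_filter]
        _ = ∑ B ∈ T, ∑ x : Fin n, if x ∈ B then 1 else 0 := Finset.sum_comm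
        _ = ∑ B ∈ T, B.card := by
            refine Finset.sum_congr rfl fun B _ => ?_
            rw [← Finset.card_filter]
            congr 1
            ext z
            simp
    rw [h1, Finset.sum_congr rfl (fun B hB => hT.1 B hB), Finset.sum_const,
      smul_eq_mul, mul_comm]
  -- pick a point of high degree
  have hx : ∃ x : Fin n, t * T.card ≤ n * d x := by
    by_contra h
    push_neg at h
    have := Finset.sum_lt_sum_of_nonempty (s := (Finset.univ : Finset (Fin n)))
      (f := fun x => n * d x) (g := fun x => t * T.card)
      ⟨⟨0, hn⟩, Finset.mem_univ _⟩ (fun x _ => h x)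
    rw [← Finset.mul_sum, hsum, Finset.sum_const, hcardU, smul_eq_mul] at this
    omega
  obtain ⟨x, hx⟩ := hx
  -- a block avoiding x exists
  have hrem : ∃ B ∈ T, x ∉ B := by
    have hcard : t + 1 ≤ ((Finset.univ : Finset (Fin n)).erase x).card := by
      rw [Finset.card_erase_of_mem (Finset.mem_univ x), hcardU]; omega
    obtain ⟨X, hXsub, hXcard⟩ := Finset.exists_subset_card_eq hcard
    obtain ⟨B, hB, hBX⟩ := hT.2 X hXcard
    exact ⟨B, hB, fun hxB => (Finset.mem_erase.mp (hXsub (hBX hxB))).1 rfl⟩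
  -- the SE system
  set S' : Finset (Finset (Fin n)) :=
    T.filter (fun B => x ∉ B) ∪
      ((Finset.univ : Finset (Fin n)).powersetCard t).filter (fun B => x ∈ B)
    with hS'_def
  have hS'cards : ∀ B ∈ S', B.card = t := by
    intro B hB
    rcases Finset.mem_union.mp hB with hB | hB
    · exact hT.1 B (Finset.mem_filter.mp hB).1
    · exact (Finset.mem_powersetCard.mp (Finset.mem_filter.mp hB).1).2
  have hSE : IsSESystem n t S' := by
    refine ⟨hS'cards, ?_⟩
    intro X hX1 hX2
    -- generic construction: given y ∈ X with y ≠ x and small enough core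
    have key : ∀ y ∈ X, y ≠ x → (insert x (X.erase y)).card ≤ t →
        ∃ B ∈ S', (X \ B).card = 1 := by
      intro y hyX hyx hYcard
      set Y : Finset (Fin n) := insert x (X.erase y) with hY_def
      have hYsub : Y ⊆ (Finset.univ : Finset (Fin n)).erase y := by
        intro z hz
        rcases Finset.mem_insert.mp hz with rfl | hz
        · exact Finset.mem_erase.mpr ⟨fun h => hyx h.symm, Finset.mem_univ _⟩
        · exact Finset.mem_erase.mpr ⟨(Finset.mem_erase.mp hz).1, Finset.mem_univ _⟩
      have hcard2 : t ≤ ((Finset.univ : Finset (Fin n)).erase y).card := by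
        rw [Finset.card_erase_of_mem (Finset.mem_univ y), hcardU]; omega
      obtain ⟨B, hYB, hBsub, hBcard⟩ :=
        Finset.exists_subsuperset_card_eq hYsub hYcard hcard2
      have hxB : x ∈ B := hYB (Finset.mem_insert_self _ _)
      have hyB : y ∉ B := fun h => (Finset.mem_erase.mp (hBsub h)).1 rfl
      refine ⟨B, Finset.mem_union_right _ (Finset.mem_filter.mpr
        ⟨Finset.mem_powersetCard.mpr ⟨B.subset_univ, hBcard⟩, hxB⟩), ?_⟩
      have : X \ B = {y} := by
        ext z
        simp only [Finset.mem_sdiff, Finset.mem_singleton]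
        constructor
        · rintro ⟨hzX, hzB⟩
          by_contra hzy
          exact hzB (hYB (Finset.mem_insert_of_mem (Finset.mem_erase.mpr ⟨hzy, hzX⟩)))
        · rintro rfl; exact ⟨hyX, hyB⟩
      rw [this, Finset.card_singleton]
    by_cases hxX : x ∈ X
    · by_cases h1 : X.card = 1
      · -- X = {x}
        obtain ⟨a, ha⟩ := Finset.card_eq_one.mp h1
        have hax : X = {x} := by
          rw [ha] at hxX ⊢; rw [Finset.mem_singleton.mp hxX]
        obtain ⟨B, hBT, hxB⟩ := hrem
        refine ⟨B, Finset.mem_union_left _ (Finset.mem_filter.mpr ⟨hBT, hxB⟩), ?_⟩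
        rw [hax]
        have hsing : ({x} : Finset (Fin n)) \ B = {x} := by
          ext z
          simp only [Finset.mem_sdiff, Finset.mem_singleton]
          exact ⟨fun h => h.1, fun h => ⟨h, h ▸ hxB⟩⟩
        rw [hsing, Finset.card_singleton]
      · obtain ⟨y, hyX, hyx⟩ := Finset.exists_mem_ne (show 1 < X.card by omega) x
        refine key y hyX hyx ?_
        have hxY : x ∈ X.erase y := Finset.mem_erase.mpr ⟨fun h => hyx h.symm, hxX⟩
        rw [Finset.card_insert_of_mem hxY, Finset.card_erase_of_mem hyX]
        omega
    · by_cases h2 : X.card = t + 1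
      · obtain ⟨B, hBT, hBX⟩ := hT.2 X h2
        have hxB : x ∉ B := fun h => hxX (hBX h)
        refine ⟨B, Finset.mem_union_left _ (Finset.mem_filter.mpr ⟨hBT, hxB⟩), ?_⟩
        rw [Finset.card_sdiff_of_subset hBX, hT.1 B hBT, h2]
        omega
      · obtain ⟨y, hyX⟩ := Finset.card_pos.mp (show 0 < X.card by omega)
        have hyx : y ≠ x := fun h => hxX (h ▸ hyX)
        refine key y hyX hyx ?_
        have hxY : x ∉ X.erase y := fun h => hxX (Finset.mem_of_mem_erase h)
        rw [Finset.card_insert_of_notMem hxY, Finset.card_erase_of_mem hyX]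
        omega
  -- cardinality bound
  have hC : (((Finset.univ : Finset (Fin n)).powersetCard t).filter
      (fun B => x ∈ B)).card ≤ (n - 1).choose (t - 1) := by
    have hsub : ((Finset.univ : Finset (Fin n)).powersetCard t).filter
        (fun B => x ∈ B) ⊆ (((Finset.univ : Finset (Fin n)).erase x).powersetCard
          (t - 1)).image (insert x) := by
      intro B hB
      obtain ⟨hBp, hxB⟩ := Finset.mem_filter.mp hB
      obtain ⟨-, hBcard⟩ := Finset.mem_powersetCard.mp hBp
      refine Finset.mem_image.mpr ⟨B.erase x, Finset.mem_powersetCard.mpr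
        ⟨Finset.erase_subset_erase x B.subset_univ, ?_⟩, Finset.insert_erase hxB⟩
      rw [Finset.card_erase_of_mem hxB, hBcard]
    calc _ ≤ ((((Finset.univ : Finset (Fin n)).erase x).powersetCard
          (t - 1)).image (insert x)).card := Finset.card_le_card hsub
      _ ≤ (((Finset.univ : Finset (Fin n)).erase x).powersetCard (t - 1)).card :=
          Finset.card_image_le
      _ = (n - 1).choose (t - 1) := by
          rw [Finset.card_powersetCard, Finset.card_erase_of_mem (Finset.mem_univ x),
            hcardU]
  have hdle : d x ≤ T.card := Finset.card_filter_le _ _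
  have hfilter : (T.filter (fun B => x ∉ B)).card = T.card - d x := by
    have := Finset.card_filter_add_card_filter_not
      (s := T) (p := fun B => x ∈ B)
    simp only [hd_def] at *
    omega
  have hS'card : S'.card ≤ (T.card - d x) + (n - 1).choose (t - 1) := by
    calc S'.card ≤ _ := Finset.card_union_le _ _
      _ ≤ (T.card - d x) + (n - 1).choose (t - 1) := by
          rw [hfilter]; exact Nat.add_le_add_left hC _
  have hSle : SENumber n t ≤ S'.card := Nat.sInf_le ⟨S', hSE, rfl⟩
  -- real arithmetic
  have hTval : (turanNumber n (t+1) t : ℝ) = (T.card : ℝ) := by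
    rw [hTcard]; rfl
  have hn' : (0 : ℝ) < n := by exact_mod_cast hn
  have hx' : (t : ℝ) * T.card ≤ n * d x := by exact_mod_cast hx
  have hdiv : (t : ℝ) / n * T.card ≤ d x := by
    rw [div_mul_eq_mul_div, div_le_iff₀ hn']
    nlinarith
  have h1 : (SENumber n t : ℝ) ≤ ((T.card : ℝ) - d x) + (n - 1).choose (t - 1) := by
    have : (SENumber n t : ℝ) ≤ ((T.card - d x : ℕ) : ℝ) + ((n - 1).choose (t - 1) : ℝ) := by
      exact_mod_cast le_trans hSle hS'card
    rwa [Nat.cast_sub hdle] at this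
  rw [hTval]
  nlinarith [h1, hdiv]
end

section
/- For every real ε > 0 there exist a real δ > 0 and an integer N such that for all integers n ≥ N and all integers t with 0 < t and t² ≤ δ·n, the single-exclusion number satisfies T(n, t+1, t) ≤ S(n,t) ≤ (1+ε)·T(n, t+1, t). (That is, S(n,t) ∼ T(n,t+1,t) as n → ∞ whenever t = o(√n).) -/
/-!
A single-exclusion system is a `(t + 1, t)`-Turán system: for `|X| = t + 1`, a `t`-block missing
exactly one point of `X` lies inside `X`. Conversely, a minimal Turán system together with at most
`2 C(n, t - 1)` blocks `Y ∪ {a}` (`|Y| = t - 1`) is a single-exclusion system. Double counting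
gives `C(n, t) ≤ (t + 1) T(n, t + 1, t)`, so the extra blocks number at most
`2t(t + 1) / (n - t + 1) = O(t² / n)` times `T(n, t + 1, t)`.
-/

open Finset

variable {n s t : ℕ}

lemma IsSESystem.isTuranSystem {S : Finset (Finset (Fin n))} (hS : IsSESystem n t S) :
    IsTuranSystem n (t + 1) t S := by
  refine ⟨hS.1, fun X hX => ?_⟩
  obtain ⟨B, hB, hXB⟩ := hS.2 X (by omega) hX.le
  refine ⟨B, hB, ?_⟩
  have hcard : #(X ∩ B) + #(X \ B) = #X := card_inter_add_card_sdiff X B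
  have hB_eq : X ∩ B = B := eq_of_subset_of_card_le inter_subset_right (by rw [hS.1 B hB]; omega)
  exact hB_eq ▸ inter_subset_left

lemma turanNumber_le_card {T : Finset (Finset (Fin n))} (hT : IsTuranSystem n s t T) :
    turanNumber n s t ≤ #T :=
  Nat.sInf_le ⟨T, hT, rfl⟩

lemma SENumber_le_card {S : Finset (Finset (Fin n))} (hS : IsSESystem n t S) :
    SENumber n t ≤ #S :=
  Nat.sInf_le ⟨S, hS, rfl⟩

lemma turanNumber_le_SENumber (h : ∃ S, IsSESystem n t S) :
    turanNumber n (t + 1) t ≤ SENumber n t := by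
  obtain ⟨S, hS, hcard⟩ := Nat.sInf_mem (s := {m | ∃ S, IsSESystem n t S ∧ #S = m})
    (by obtain ⟨S, hS⟩ := h; exact ⟨_, S, hS, rfl⟩)
  exact (turanNumber_le_card hS.isTuranSystem).trans hcard.le

lemma exists_isTuranSystem_card_eq (hts : t ≤ s) :
    ∃ T, IsTuranSystem n s t T ∧ #T = turanNumber n s t := by
  refine Nat.sInf_mem (s := {m | ∃ T, IsTuranSystem n s t T ∧ #T = m})
    ⟨_, powersetCard t univ, ⟨fun B hB => (mem_powersetCard.1 hB).2, ?_⟩, rfl⟩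
  intro X hX
  obtain ⟨B, hBX, hB⟩ := exists_subset_card_eq (hX ▸ hts : t ≤ #X)
  exact ⟨B, mem_powersetCard.2 ⟨subset_univ B, hB⟩, hBX⟩

/-- Double counting: every `s`-set is `B ∪ Y` for a block `B` and an `(s - t)`-set `Y ⊆ Bᶜ`. -/
lemma choose_le_card_mul_choose {T : Finset (Finset (Fin n))} (hT : IsTuranSystem n s t T) :
    n.choose s ≤ #T * (n - t).choose (s - t) := by
  have hcover :
      powersetCard s univ ⊆ T.biUnion fun B => (powersetCard (s - t) Bᶜ).image (· ∪ B) := by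
    intro X hX
    obtain ⟨B, hB, hBX⟩ := hT.2 X (mem_powersetCard.1 hX).2
    refine mem_biUnion.2 ⟨B, hB, mem_image.2
      ⟨X \ B, mem_powersetCard.2 ⟨?_, ?_⟩, sdiff_union_of_subset hBX⟩⟩
    · exact fun x hx => mem_compl.2 (mem_sdiff.1 hx).2
    · rw [card_sdiff_of_subset hBX, (mem_powersetCard.1 hX).2, hT.1 B hB]
  calc n.choose s = #(powersetCard s (univ : Finset (Fin n))) := by simp
    _ ≤ _ := card_le_card hcover
    _ ≤ #T * (n - t).choose (s - t) := by
      refine card_biUnion_le_card_mul _ _ _ fun B hB => card_image_le.trans ?_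
      simp [card_compl, hT.1 B hB]

lemma choose_le_succ_mul_turanNumber (htn : t < n) :
    n.choose t ≤ (t + 1) * turanNumber n (t + 1) t := by
  obtain ⟨T, hT, hcard⟩ := exists_isTuranSystem_card_eq (n := n) (Nat.le_add_right t 1)
  have hcount := choose_le_card_mul_choose hT
  rw [Nat.add_sub_cancel_left, Nat.choose_one_right, hcard] at hcount
  refine Nat.le_of_mul_le_mul_right ?_ (Nat.sub_pos_of_lt htn)
  calc n.choose t * (n - t) = n.choose (t + 1) * (t + 1) := (Nat.choose_succ_right_eq n t).symm
    _ ≤ turanNumber n (t + 1) t * (n - t) * (t + 1) := Nat.mul_le_mul_right _ hcount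
    _ = (t + 1) * turanNumber n (t + 1) t * (n - t) := by ring

lemma choose_pred_mul_le_turanNumber (ht : 0 < t) (htn : t < n) :
    n.choose (t - 1) * (n - t + 1) ≤ t * (t + 1) * turanNumber n (t + 1) t := by
  obtain ⟨k, rfl⟩ : ∃ k, t = k + 1 := ⟨t - 1, by omega⟩
  rw [Nat.add_sub_cancel, show n - (k + 1) + 1 = n - k by omega, ← Nat.choose_succ_right_eq,
    mul_comm, mul_assoc]
  exact Nat.mul_le_mul_left _ (choose_le_succ_mul_turanNumber htn)

lemma Finset.sdiff_insert_eq_singleton {α : Type*} [DecidableEq α] {X Y : Finset α} {x a : α}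
    (hx : x ∈ X) (hXY : X.erase x ⊆ Y) (hxY : x ∉ Y) (hax : a ≠ x) :
    X \ insert a Y = {x} := by
  ext y
  simp only [mem_sdiff, mem_insert, mem_singleton, not_or]
  constructor
  · rintro ⟨hyX, -, hyY⟩
    by_contra hyx
    exact hyY (hXY (mem_erase.2 ⟨hyx, hyX⟩))
  · rintro rfl
    exact ⟨hx, hax.symm, hxY⟩

/-- The blocks `insert a Y`, for every `(t - 1)`-set `Y` and two choices of `a ∉ Y`: given
`x ∈ X`, extend `X.erase x` to such a `Y ∌ x`; one of the two choices of `a` differs from `x`. -/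
lemma exists_family_card_sdiff_eq_one (ht : 0 < t) (htn : t < n) :
    ∃ F : Finset (Finset (Fin n)), (∀ B ∈ F, #B = t) ∧ #F ≤ 2 * n.choose (t - 1) ∧
      ∀ X : Finset (Fin n), 1 ≤ #X → #X ≤ t → ∃ B ∈ F, #(X \ B) = 1 := by
  obtain ⟨k, rfl⟩ : ∃ k, t = k + 1 := ⟨t - 1, by omega⟩
  rw [Nat.add_sub_cancel]
  have hpair : ∀ Y ∈ powersetCard k (univ : Finset (Fin n)), ∃ P ⊆ Yᶜ, #P = 2 := fun Y hY =>
    exists_subset_card_eq (by rw [card_compl, Fintype.card_fin, (mem_powersetCard.1 hY).2]; omega)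
  choose! P hPY hP using hpair
  refine ⟨(powersetCard k univ).biUnion fun Y => (P Y).image (insert · Y), ?_, ?_, ?_⟩
  · intro B hB
    simp only [mem_biUnion, mem_image] at hB
    obtain ⟨Y, hY, a, ha, rfl⟩ := hB
    rw [card_insert_of_notMem (mem_compl.1 (hPY Y hY ha)), (mem_powersetCard.1 hY).2]
  · calc _ ≤ #(powersetCard k (univ : Finset (Fin n))) * 2 :=
          card_biUnion_le_card_mul _ _ _ fun Y hY => card_image_le.trans (hP Y hY).le
      _ = 2 * n.choose k := by simp [mul_comm]
  · intro X hX1 hXt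
    obtain ⟨x, hx⟩ := card_pos.1 hX1
    obtain ⟨Y, hXY, hYx, hY⟩ := exists_subsuperset_card_eq (n := k)
      (erase_subset_erase x (subset_univ X)) (by rw [card_erase_of_mem hx]; omega)
      (by simp; omega)
    have hYmem : Y ∈ powersetCard k univ := mem_powersetCard.2 ⟨subset_univ Y, hY⟩
    obtain ⟨a, ha, hax⟩ := exists_mem_ne (by rw [hP Y hYmem]; norm_num) x
    refine ⟨insert a Y, mem_biUnion.2 ⟨Y, hYmem, mem_image_of_mem _ ha⟩, ?_⟩
    rw [sdiff_insert_eq_singleton hx hXY (fun h => by simpa using hYx h) hax, card_singleton]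

lemma exists_isSESystem_card_le (ht : 0 < t) (htn : t < n) :
    ∃ S, IsSESystem n t S ∧ #S ≤ turanNumber n (t + 1) t + 2 * n.choose (t - 1) := by
  obtain ⟨T, hT, hTcard⟩ := exists_isTuranSystem_card_eq (n := n) (Nat.le_add_right t 1)
  obtain ⟨F, hF, hFcard, hFcover⟩ := exists_family_card_sdiff_eq_one ht htn
  refine ⟨T ∪ F, ⟨fun B hB => (mem_union.1 hB).elim (hT.1 B) (hF B), fun X hX1 hXt => ?_⟩, ?_⟩
  · rcases hXt.lt_or_eq with hXt | hXt
    · obtain ⟨B, hB, hXB⟩ := hFcover X hX1 (by omega)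
      exact ⟨B, mem_union_right T hB, hXB⟩
    · obtain ⟨B, hB, hBX⟩ := hT.2 X hXt
      refine ⟨B, mem_union_left F hB, ?_⟩
      rw [card_sdiff_of_subset hBX, hXt, hT.1 B hB, Nat.add_sub_cancel_left]
  · exact (card_union_le T F).trans (hTcard ▸ Nat.add_le_add_left hFcard _)

lemma SENumber_le_one_add_mul_turanNumber {ε : ℝ} (ht : 0 < t) (htn : t < n)
    (hε : 2 * (t : ℝ) * (t + 1) ≤ ε * (n - t + 1)) :
    (SENumber n t : ℝ) ≤ (1 + ε) * turanNumber n (t + 1) t := by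
  obtain ⟨S, hS, hScard⟩ := exists_isSESystem_card_le ht htn
  set T := turanNumber n (t + 1) t
  have hSE : (SENumber n t : ℝ) ≤ T + 2 * n.choose (t - 1) := by
    exact_mod_cast (SENumber_le_card hS).trans hScard
  have hC : (n.choose (t - 1) : ℝ) * (n - t + 1) ≤ t * (t + 1) * T := by
    have := choose_pred_mul_le_turanNumber ht htn
    rw [← Nat.cast_le (α := ℝ)] at this
    push_cast [Nat.cast_sub htn.le] at this
    exact this
  have hgap : (0 : ℝ) < n - t + 1 := by
    have : (t : ℝ) < n := by exact_mod_cast htn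
    linarith
  have hT : (0 : ℝ) ≤ T := Nat.cast_nonneg T
  have hcorr : 2 * (n.choose (t - 1) : ℝ) ≤ ε * T :=
    le_of_mul_le_mul_right (by nlinarith) hgap
  linarith

theorem stmt16 (ε : ℝ) (hε : 0 < ε) :
    ∃ δ : ℝ, 0 < δ ∧ ∃ N : ℕ, ∀ n : ℕ, N ≤ n → ∀ t : ℕ, 0 < t →
      (t : ℝ) ^ 2 ≤ δ * n →
      turanNumber n (t + 1) t ≤ SENumber n t ∧
      (SENumber n t : ℝ) ≤ (1 + ε) * (turanNumber n (t + 1) t : ℝ) := by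
  refine ⟨min (ε / 8) (1 / 4), by positivity, 0, fun n _ t ht hδ => ?_⟩
  have htR : (1 : ℝ) ≤ t := by exact_mod_cast ht
  have hδε : (t : ℝ) ^ 2 ≤ ε / 8 * n := hδ.trans (by gcongr; exact min_le_left _ _)
  have hδ4 : (t : ℝ) ^ 2 ≤ 1 / 4 * n := hδ.trans (by gcongr; exact min_le_right _ _)
  have htnR : (2 * t : ℝ) ≤ n := by nlinarith
  have htn : t < n := by
    have : 2 * t ≤ n := by exact_mod_cast htnR
    omega
  obtain ⟨S, hS, -⟩ := exists_isSESystem_card_le ht htn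
  refine ⟨turanNumber_le_SENumber ⟨S, hS⟩, SENumber_le_one_add_mul_turanNumber ht htn ?_⟩
  calc 2 * (t : ℝ) * (t + 1) ≤ 4 * t ^ 2 := by nlinarith
    _ ≤ ε * (n / 2) := by linarith
    _ ≤ ε * (n - t + 1) := by gcongr; linarith
end

section
/- For all integers n and t with 0 < t < n − 1, the single-exclusion number satisfies (1 + (n−t)/(n·(n−t−1/2)))·S(n,t) ≥ T(n−1, t+1, t) + (1/(n−t−1/2))·binom(n−1, t), where binom(n−1,t) denotes the binomial coefficient. -/
/-- In an SE system, every `(t+1)`-set contains a block. -/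
lemma exists_block_subset {n t : ℕ} {S : Finset (Finset (Fin n))} (hS : IsSESystem n t S)
    {X : Finset (Fin n)} (hX : X.card = t + 1) : ∃ B ∈ S, B ⊆ X := by
  obtain ⟨B, hBS, hB1⟩ := hS.2 X (by omega) (by omega)
  have hBt := hS.1 B hBS
  have h := Finset.card_sdiff_add_card_inter X B
  have hIB : X ∩ B = B :=
    Finset.eq_of_subset_of_card_le Finset.inter_subset_right (by omega)
  exact ⟨B, hBS, by rw [← hIB]; exact Finset.inter_subset_left⟩

/-- SE systems exist (e.g. all `t`-subsets). -/
lemma se_nonempty {n t : ℕ} (htn : t < n) :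
    ∃ S : Finset (Finset (Fin n)), IsSESystem n t S := by
  refine ⟨Finset.univ.powersetCard t, ?_, ?_⟩
  · intro B hB; exact (Finset.mem_powersetCard.1 hB).2
  · intro X hX1 hX2
    obtain ⟨x, hx⟩ := Finset.card_pos.1 hX1
    obtain ⟨B, hB1, hB2, hB3⟩ := Finset.exists_subsuperset_card_eq
      (s := X.erase x) (t := Finset.univ.erase x) (n := t)
      (Finset.erase_subset_erase _ (Finset.subset_univ _))
      (by have := Finset.card_erase_of_mem hx; omega)
      (by rw [Finset.card_erase_of_mem (Finset.mem_univ x), Finset.card_univ,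
          Fintype.card_fin]; omega)
    have hxB : x ∉ B := fun hxB => (Finset.mem_erase.1 (hB2 hxB)).1 rfl
    refine ⟨B, Finset.mem_powersetCard.2 ⟨Finset.subset_univ _, hB3⟩, ?_⟩
    have : X \ B = {x} := by
      apply Finset.Subset.antisymm
      · intro a ha
        obtain ⟨haX, haB⟩ := Finset.mem_sdiff.1 ha
        by_contra hax
        exact haB (hB1 (Finset.mem_erase.2 ⟨by simpa using hax, haX⟩))
      · intro a ha
        rw [Finset.mem_singleton] at ha
        subst ha
        exact Finset.mem_sdiff.2 ⟨hx, hxB⟩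
    rw [this, Finset.card_singleton]

/-- The number of `(t+1)`-supersets of a `t`-set in `Fin n` is `n - t`. -/
lemma card_supersets {n t : ℕ} (B : Finset (Fin n)) (hB : B.card = t) :
    ((Finset.univ.powersetCard (t+1)).filter (fun Z => B ⊆ Z)).card = n - t := by
  have key : Bᶜ.card = ((Finset.univ.powersetCard (t+1)).filter (fun Z => B ⊆ Z)).card := by
    apply Finset.card_bij (fun y _ => insert y B)
    · intro y hy
      rw [Finset.mem_compl] at hy
      refine Finset.mem_filter.2 ⟨Finset.mem_powersetCard.2 ⟨Finset.subset_univ _, ?_⟩,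
        Finset.subset_insert _ _⟩
      rw [Finset.card_insert_of_notMem hy, hB]
    · intro y hy y' hy' h
      rw [Finset.mem_compl] at hy hy'
      have : y ∈ insert y' B := h ▸ Finset.mem_insert_self y B
      rcases Finset.mem_insert.1 this with h' | h'
      · exact h'
      · exact absurd h' hy
    · intro Z hZ
      rw [Finset.mem_filter, Finset.mem_powersetCard] at hZ
      obtain ⟨⟨_, hZcard⟩, hBZ⟩ := hZ
      have hsd : (Z \ B).card = 1 := by
        rw [Finset.card_sdiff_of_subset hBZ, hZcard, hB]; omega
      obtain ⟨y, hy⟩ := Finset.card_eq_one.1 hsd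
      have hyZ : y ∈ Z \ B := hy ▸ Finset.mem_singleton_self y
      rw [Finset.mem_sdiff] at hyZ
      refine ⟨y, Finset.mem_compl.2 hyZ.2, ?_⟩
      apply Finset.eq_of_subset_of_card_le
      · exact Finset.insert_subset hyZ.1 hBZ
      · rw [Finset.card_insert_of_notMem hyZ.2, hZcard, hB]
  rw [← key, Finset.card_compl, Fintype.card_fin, hB]

/-- Key counting bound: `2·C(n,t+1) + |S| ≤ 2(n-t)|S|` for an SE system `S`.
Every `(t+1)`-set `Z` contains at least one block, the total number of
(block, superset) incidences is `(n-t)|S|`, and every block sits inside some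
`(t+1)`-set containing at least two blocks. -/
lemma lemma_II {n t : ℕ} {S : Finset (Finset (Fin n))} (hS : IsSESystem n t S)
    (ht : 0 < t) :
    2 * Nat.choose n (t+1) + S.card ≤ 2 * (n - t) * S.card := by
  classical
  set Zs : Finset (Finset (Fin n)) := Finset.univ.powersetCard (t+1) with hZs
  set k : Finset (Fin n) → ℕ := fun Z => (S.filter (fun B => B ⊆ Z)).card with hk
  have ha : ∑ Z ∈ Zs, k Z = (n - t) * S.card := by
    have : ∑ Z ∈ Zs, k Z = ∑ B ∈ S, ((Zs.filter (fun Z => B ⊆ Z)).card) := by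
      simp only [hk, Finset.card_filter]
      exact Finset.sum_comm
    rw [this]
    rw [Finset.sum_congr rfl (fun B hB => card_supersets B (hS.1 B hB))]
    rw [Finset.sum_const, smul_eq_mul, mul_comm]
  have hb : ∀ Z ∈ Zs, 1 ≤ k Z := by
    intro Z hZ
    obtain ⟨B, hBS, hBZ⟩ := exists_block_subset hS (Finset.mem_powersetCard.1 hZ).2
    exact Finset.card_pos.2 ⟨B, Finset.mem_filter.2 ⟨hBS, hBZ⟩⟩
  have hc : S.card ≤ ∑ Z ∈ Zs, (2 * k Z - 2) := by
    have hcover : ∀ B ∈ S, ∃ Z ∈ Zs.filter (fun Z => 2 ≤ k Z), B ⊆ Z := by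
      intro B hB
      have hBt := hS.1 B hB
      obtain ⟨B', hB'S, hB'1⟩ := hS.2 B (by omega) (by omega)
      have hne : B' ≠ B := by
        intro h; subst h; simp at hB'1
      have hBt' := hS.1 B' hB'S
      have hcard : (B ∪ B').card = t + 1 := by
        have := Finset.card_sdiff_add_card B B'
        omega
      refine ⟨B ∪ B', Finset.mem_filter.2 ⟨Finset.mem_powersetCard.2
        ⟨Finset.subset_univ _, hcard⟩, ?_⟩, Finset.subset_union_left⟩
      apply Finset.one_lt_card.2
      exact ⟨B, Finset.mem_filter.2 ⟨hB, Finset.subset_union_left⟩,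
        B', Finset.mem_filter.2 ⟨hB'S, Finset.subset_union_right⟩, fun h => hne h.symm⟩
    calc S.card ≤ ((Zs.filter (fun Z => 2 ≤ k Z)).biUnion
          (fun Z => S.filter (fun B => B ⊆ Z))).card := by
          apply Finset.card_le_card
          intro B hB
          obtain ⟨Z, hZ, hBZ⟩ := hcover B hB
          exact Finset.mem_biUnion.2 ⟨Z, hZ, Finset.mem_filter.2 ⟨hB, hBZ⟩⟩
      _ ≤ ∑ Z ∈ Zs.filter (fun Z => 2 ≤ k Z), k Z := Finset.card_biUnion_le
      _ ≤ ∑ Z ∈ Zs.filter (fun Z => 2 ≤ k Z), (2 * k Z - 2) := by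
          apply Finset.sum_le_sum
          intro Z hZ
          have := (Finset.mem_filter.1 hZ).2
          omega
      _ ≤ ∑ Z ∈ Zs, (2 * k Z - 2) :=
          Finset.sum_le_sum_of_subset (Finset.filter_subset _ _)
  have hsplit : ∑ Z ∈ Zs, 2 * k Z = (∑ Z ∈ Zs, (2 * k Z - 2)) + 2 * Zs.card := by
    rw [Finset.sum_congr rfl (fun Z hZ => show 2 * k Z = (2 * k Z - 2) + 2 by
      have := hb Z hZ; omega)]
    rw [Finset.sum_add_distrib, Finset.sum_const, smul_eq_mul, mul_comm]
  have hZcard : Zs.card = Nat.choose n (t+1) := by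
    rw [hZs, Finset.card_powersetCard, Finset.card_univ, Fintype.card_fin]
  have htot : ∑ Z ∈ Zs, 2 * k Z = 2 * ((n - t) * S.card) := by
    rw [← Finset.mul_sum, ha]
  rw [hZcard] at hsplit
  rw [mul_assoc]
  omega

/-- Turán bound: deleting any point of an SE system yields a Turán system; summing
over all points gives `(k+1)·T(k,t+1,t) ≤ (k+1-t)|S|`. -/
lemma lemma_I {k t : ℕ} {S : Finset (Finset (Fin (k+1)))} (hS : IsSESystem (k+1) t S) :
    (k+1) * turanNumber k (t+1) t ≤ (k + 1 - t) * S.card := by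
  classical
  have hx : ∀ x : Fin (k+1), turanNumber k (t+1) t ≤ (S.filter (fun B => x ∉ B)).card := by
    intro x
    set embx : Fin k ↪ Fin (k+1) := x.succAboveEmb with hembx
    set T : Finset (Finset (Fin k)) :=
      Finset.univ.filter (fun A => A.map embx ∈ S) with hT
    have hTsys : IsTuranSystem k (t+1) t T := by
      constructor
      · intro A hA
        have hmem : A.map embx ∈ S := (Finset.mem_filter.1 hA).2
        have := hS.1 _ hmem
        simpa using this
      · intro X hX
        have hX' : (X.map embx).card = t + 1 := by simpa using hX
        obtain ⟨B, hBS, hBsub⟩ := exists_block_subset hS hX'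
        obtain ⟨A, hAX, rfl⟩ := Finset.subset_map_iff.1 hBsub
        exact ⟨A, Finset.mem_filter.2 ⟨Finset.mem_univ _, hBS⟩, hAX⟩
    have hle : T.card ≤ (S.filter (fun B => x ∉ B)).card := by
      apply Finset.card_le_card_of_injOn (fun A => A.map embx)
      · intro A hA
        refine Finset.mem_filter.2 ⟨(Finset.mem_filter.1 hA).2, ?_⟩
        intro hmem
        obtain ⟨a, _, ha⟩ := Finset.mem_map.1 hmem
        exact Fin.succAbove_ne x a ha
      · intro A _ A' _ h
        exact Finset.map_injective embx h
    exact le_trans (Nat.sInf_le ⟨T, hTsys, rfl⟩) hle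
  calc (k+1) * turanNumber k (t+1) t
      = ∑ _x : Fin (k+1), turanNumber k (t+1) t := by
        rw [Finset.sum_const, Finset.card_univ, Fintype.card_fin, smul_eq_mul]
    _ ≤ ∑ x : Fin (k+1), (S.filter (fun B => x ∉ B)).card :=
        Finset.sum_le_sum (fun x _ => hx x)
    _ = (k + 1 - t) * S.card := by
        have : ∀ x : Fin (k+1), (S.filter (fun B => x ∉ B)).card
            = ∑ B ∈ S, if x ∉ B then 1 else 0 := fun x => Finset.card_filter _ _
        rw [Finset.sum_congr rfl (fun x _ => this x), Finset.sum_comm]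
        have hB : ∀ B ∈ S, (∑ x : Fin (k+1), if x ∉ B then 1 else 0) = k + 1 - t := by
          intro B hB
          have : (∑ x : Fin (k+1), if x ∉ B then 1 else 0)
              = (Finset.univ.filter (fun x => x ∉ B)).card := (Finset.card_filter _ _).symm
          rw [this]
          have hcompl : Finset.univ.filter (fun x => x ∉ B) = Bᶜ := by
            ext a; simp [Finset.mem_compl]
          rw [hcompl, Finset.card_compl, Fintype.card_fin, hS.1 B hB]
        rw [Finset.sum_congr rfl hB, Finset.sum_const, smul_eq_mul, mul_comm]

set_option maxHeartbeats 1000000 in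
theorem stmt17 (n t : ℕ) (ht : 0 < t) (htn : t + 1 < n) :
    (1 + ((n : ℝ) - t) / ((n : ℝ) * ((n : ℝ) - t - 1 / 2))) * (SENumber n t : ℝ) ≥
      (turanNumber (n - 1) (t + 1) t : ℝ) +
      (1 / ((n : ℝ) - t - 1 / 2)) * ((n - 1).choose t : ℝ) := by
  obtain ⟨k, rfl⟩ : ∃ k, n = k + 1 := ⟨n - 1, by omega⟩
  have hne : {m : ℕ | ∃ S : Finset (Finset (Fin (k+1))),
      IsSESystem (k+1) t S ∧ S.card = m}.Nonempty := by
    obtain ⟨S, hS⟩ := se_nonempty (show t < k + 1 by omega)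
    exact ⟨S.card, S, hS, rfl⟩
  obtain ⟨S, hS, hScard⟩ := Nat.sInf_mem hne
  have hI := lemma_I hS
  have hII := lemma_II hS ht
  have hScard' : S.card = SENumber (k+1) t := hScard
  rw [hScard'] at hI hII
  have hid : (k+1) * Nat.choose k t = Nat.choose (k+1) (t+1) * (t+1) :=
    Nat.add_one_mul_choose_eq k t
  simp only [Nat.add_sub_cancel]
  have hkt : t ≤ k + 1 := by omega
  have hIR : ((k:ℝ)+1) * (turanNumber k (t+1) t : ℝ)
      ≤ ((k:ℝ)+1-(t:ℝ)) * (SENumber (k+1) t : ℝ) := by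
    have := hI
    have hcast : ((k + 1 - t : ℕ) : ℝ) = (k:ℝ)+1-(t:ℝ) := by
      rw [Nat.cast_sub hkt]; push_cast; ring
    have h2 := (Nat.cast_le (α := ℝ)).2 this
    push_cast at h2
    rw [hcast] at h2
    linarith
  have hIIR : 2 * ((Nat.choose (k+1) (t+1) : ℝ)) + (SENumber (k+1) t : ℝ)
      ≤ 2 * ((k:ℝ)+1-(t:ℝ)) * (SENumber (k+1) t : ℝ) := by
    have := hII
    have hcast : ((k + 1 - t : ℕ) : ℝ) = (k:ℝ)+1-(t:ℝ) := by
      rw [Nat.cast_sub hkt]; push_cast; ring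
    have h2 := (Nat.cast_le (α := ℝ)).2 this
    push_cast at h2
    rw [hcast] at h2
    linarith
  have hidR : ((k:ℝ)+1) * (Nat.choose k t : ℝ)
      = (Nat.choose (k+1) (t+1) : ℝ) * ((t:ℝ)+1) := by
    exact_mod_cast congrArg (Nat.cast (R := ℝ)) hid
  set m : ℝ := (SENumber (k+1) t : ℝ) with hm
  set T : ℝ := (turanNumber k (t+1) t : ℝ) with hT
  set C : ℝ := (Nat.choose k t : ℝ) with hC
  set K : ℝ := (Nat.choose (k+1) (t+1) : ℝ) with hK
  clear_value m T C K
  clear hI hII hScard hScard' hne hS hid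
  have hmpos : (0:ℝ) ≤ m := hm ▸ Nat.cast_nonneg _
  have htk : (t:ℝ) + 1 + 1 ≤ (k:ℝ) + 1 := by
    have : (t:ℝ) + 1 < (k:ℝ) + 1 := by exact_mod_cast htn
    have h2 : ((t + 1 : ℕ) : ℝ) + 1 ≤ ((k + 1 : ℕ) : ℝ) := by exact_mod_cast htn
    push_cast at h2; linarith
  have hD : (0:ℝ) < (k:ℝ)+1-(t:ℝ)-1/2 := by linarith
  have hn0 : (0:ℝ) < ((k:ℝ)+1) := by positivity
  push_cast
  rw [ge_iff_le]
  have f1 : ((k:ℝ)+1) * (((k:ℝ)+1-(t:ℝ)-1/2) * T)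
      ≤ (((k:ℝ)+1-(t:ℝ)-1/2)) * ((((k:ℝ)+1-(t:ℝ))) * m) := by
    nlinarith [hIR, hD]
  have f2 : K ≤ (((k:ℝ)+1-(t:ℝ)-1/2)) * m := by nlinarith [hIIR]
  have f2' : ((t:ℝ)+1) * K ≤ ((t:ℝ)+1) * ((((k:ℝ)+1-(t:ℝ)-1/2)) * m) := by
    apply mul_le_mul_of_nonneg_left f2 (by positivity)
  have hDne : ((k:ℝ)+1-(t:ℝ)-1/2) ≠ 0 := ne_of_gt hD
  have hnne : ((k:ℝ)+1) ≠ 0 := ne_of_gt hn0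
  have hring : ((k:ℝ)+1) * (((k:ℝ)+1-(t:ℝ)-1/2)) * m + ((((k:ℝ)+1)-(t:ℝ))) * m
      = (((k:ℝ)+1-(t:ℝ)-1/2)) * ((((k:ℝ)+1)-(t:ℝ)) * m)
        + ((t:ℝ)+1) * ((((k:ℝ)+1-(t:ℝ)-1/2)) * m) + m/2 := by ring
  have core : ((k:ℝ)+1) * ((((k:ℝ)+1-(t:ℝ)-1/2)) * T) + ((k:ℝ)+1) * C
      ≤ ((k:ℝ)+1) * (((k:ℝ)+1-(t:ℝ)-1/2)) * m + ((((k:ℝ)+1)-(t:ℝ))) * m := by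
    nlinarith [f1, f2', hidR, hring, hmpos]
  have hpos : (0:ℝ) < (((k:ℝ)+1)) * (((k:ℝ)+1-(t:ℝ)-1/2)) := by positivity
  have key : T + 1 / ((k:ℝ)+1-(t:ℝ)-1/2) * C
      ≤ (1 + (((k:ℝ)+1) - (t:ℝ)) / ((((k:ℝ)+1)) * (((k:ℝ)+1) - (t:ℝ) - 1/2))) * m := by
    apply le_of_mul_le_mul_right _ hpos
    have elhs : (T + 1 / ((k:ℝ)+1-(t:ℝ)-1/2) * C) * ((((k:ℝ)+1)) * (((k:ℝ)+1-(t:ℝ)-1/2)))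
        = ((k:ℝ)+1) * ((((k:ℝ)+1-(t:ℝ)-1/2)) * T) + ((k:ℝ)+1) * C := by
      linear_combination (((k:ℝ)+1) * C) * (inv_mul_cancel₀ hDne)
    have erhs : ((1 + (((k:ℝ)+1) - (t:ℝ)) / ((((k:ℝ)+1)) * (((k:ℝ)+1) - (t:ℝ) - 1/2))) * m)
          * ((((k:ℝ)+1)) * (((k:ℝ)+1-(t:ℝ)-1/2)))
        = ((k:ℝ)+1) * (((k:ℝ)+1-(t:ℝ)-1/2)) * m + ((((k:ℝ)+1)-(t:ℝ))) * m := by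
      have hnd : (((k:ℝ)+1)) * (((k:ℝ)+1-(t:ℝ)-1/2)) ≠ 0 := ne_of_gt hpos
      linear_combination (((((k:ℝ)+1)-(t:ℝ))) * m) * (mul_inv_cancel₀ hnd)
    rw [elhs, erhs]
    exact core
  exact key
end

section
/- For all integers n and t with 0 < t < n − 1, the single-exclusion number satisfies the lower bound S(n,t) ≥ binom(n, t+1) / (n − t − t/n + 1/2), where binom(n,t+1) denotes the binomial coefficient. -/
open Finset

lemma Finset.subset_of_card_sdiff_eq_one {α : Type*} [DecidableEq α] {s t : Finset α}
    (h : #(s \ t) = 1) (hcard : #s = #t + 1) : t ⊆ s := by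
  have := card_sdiff_add_card_inter s t
  exact inter_eq_right.mp (eq_of_subset_of_card_le inter_subset_right (by omega))

lemma Finset.card_filter_subset_powersetCard_succ {α : Type*} [Fintype α] [DecidableEq α]
    (s : Finset α) : #{u ∈ powersetCard (#s + 1) univ | s ⊆ u} = Fintype.card α - #s := by
  rw [← card_compl, ← card_image_of_injOn (insert_inj_on' s)]
  congr 1
  ext u
  simp only [mem_filter, mem_powersetCard, subset_univ, true_and, mem_image, mem_compl,
    exists_eq_insert_iff]
  tauto

theorem Finset.card_add_two_mul_card_le_two_mul_sum_card_bipartiteBelow {α β : Type*}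
    (r : α → β → Prop) [∀ a b, Decidable (r a b)] {s : Finset α} {t : Finset β}
    (hcover : ∀ b ∈ t, (s.bipartiteBelow r b).Nonempty)
    (hpair : ∀ a ∈ s, ∃ b ∈ t, r a b ∧ 1 < #(s.bipartiteBelow r b)) :
    #s + 2 * #t ≤ 2 * ∑ b ∈ t, #(s.bipartiteBelow r b) := by
  set deg : β → ℕ := fun b => #(s.bipartiteBelow r b)
  have hs : #s ≤ ∑ b ∈ t with 1 < deg b, deg b := by
    rw [← sum_card_bipartiteAbove_eq_sum_card_bipartiteBelow, card_eq_sum_ones]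
    refine sum_le_sum fun a ha => ?_
    obtain ⟨b, hb, hab, hb2⟩ := hpair a ha
    exact card_pos.mpr ⟨b, (mem_bipartiteAbove r).mpr ⟨mem_filter.mpr ⟨hb, hb2⟩, hab⟩⟩
  have hpoint : ∀ b ∈ t, (if 1 < deg b then deg b else 0) + 2 ≤ 2 * deg b := by
    intro b hb
    have : 0 < deg b := (hcover b hb).card_pos
    split_ifs <;> omega
  calc #s + 2 * #t ≤ ∑ b ∈ t, ((if 1 < deg b then deg b else 0) + 2) := by
        rw [sum_add_distrib, ← sum_filter, sum_const, smul_eq_mul]; omega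
    _ ≤ ∑ b ∈ t, 2 * deg b := sum_le_sum hpoint
    _ = 2 * ∑ b ∈ t, deg b := (mul_sum ..).symm

namespace IsSESystem

variable {n t : ℕ} {S : Finset (Finset (Fin n))}

lemma exists_subset_of_card_eq (hS : IsSESystem n t S) {X : Finset (Fin n)}
    (hX : #X = t + 1) : ∃ B ∈ S, B ⊆ X := by
  obtain ⟨B, hB, hXB⟩ := hS.2 X (by omega) hX.le
  exact ⟨B, hB, subset_of_card_sdiff_eq_one hXB (by rw [hX, hS.1 B hB])⟩

lemma exists_superset_one_lt_card_filter_subset (hS : IsSESystem n t S) (ht : 0 < t)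
    {B : Finset (Fin n)} (hB : B ∈ S) :
    ∃ X : Finset (Fin n), #X = t + 1 ∧ B ⊆ X ∧ 1 < #{C ∈ S | C ⊆ X} := by
  have hBt := hS.1 B hB
  obtain ⟨B', hB', hBB'⟩ := hS.2 B (by omega) (by omega)
  have hne : B ≠ B' := by
    rintro rfl
    simp at hBB'
  refine ⟨B ∪ B', ?_, subset_union_left, ?_⟩
  · rw [← card_sdiff_add_card, hBB', hS.1 B' hB', add_comm]
  · calc 1 < #{B, B'} := by rw [card_pair hne]; omega
      _ ≤ #{C ∈ S | C ⊆ B ∪ B'} := card_le_card <| by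
          simp [insert_subset_iff, hB, hB', subset_union_left, subset_union_right]

theorem two_mul_choose_add_card_le (hS : IsSESystem n t S) (ht : 0 < t) :
    2 * n.choose (t + 1) + #S ≤ 2 * (n - t) * #S := by
  set T := powersetCard (t + 1) (univ : Finset (Fin n))
  have hcount :=
    card_add_two_mul_card_le_two_mul_sum_card_bipartiteBelow (· ⊆ ·) (s := S) (t := T)
    (fun X hX => by
      obtain ⟨B, hB, hBX⟩ := hS.exists_subset_of_card_eq (mem_powersetCard.mp hX).2
      exact ⟨B, (mem_bipartiteBelow _).mpr ⟨hB, hBX⟩⟩)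
    (fun B hB => by
      obtain ⟨X, hX, hBX, hdeg⟩ := hS.exists_superset_one_lt_card_filter_subset ht hB
      exact ⟨X, mem_powersetCard.mpr ⟨subset_univ X, hX⟩, hBX, hdeg⟩)
  have hdeg : ∑ B ∈ S, #(T.bipartiteAbove (· ⊆ ·) B) = (n - t) * #S := by
    rw [sum_const_nat fun B hB => ?_, mul_comm]
    simpa [bipartiteAbove, T, hS.1 B hB] using card_filter_subset_powersetCard_succ B
  rw [← sum_card_bipartiteAbove_eq_sum_card_bipartiteBelow, hdeg, card_powersetCard, card_univ,
    Fintype.card_fin] at hcount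
  linarith

end IsSESystem

lemma isSESystem_powersetCard {n t : ℕ} (htn : t < n) :
    IsSESystem n t (powersetCard t univ) := by
  refine ⟨fun B hB => (mem_powersetCard.mp hB).2, fun X hX1 hX2 => ?_⟩
  obtain ⟨x, hx⟩ := card_pos.mp hX1
  obtain ⟨B, hXB, hBx, hB⟩ :=
    exists_subsuperset_card_eq (n := t) (erase_subset_erase x (subset_univ X))
    (by rw [card_erase_of_mem hx]; omega)
    (by rw [card_erase_of_mem (mem_univ x), card_univ, Fintype.card_fin]; omega)
  refine ⟨B, mem_powersetCard.mpr ⟨subset_univ B, hB⟩, card_eq_one.mpr ⟨x, ?_⟩⟩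
  ext y
  by_cases hy : y = x
  · subst hy
    simpa [hx] using fun h => (mem_erase.mp (hBx h)).1 rfl
  · simpa [hy] using fun hyX => hXB (mem_erase.mpr ⟨hy, hyX⟩)

lemma exists_isSESystem_card_eq_SENumber {n t : ℕ} (htn : t < n) :
    ∃ S, IsSESystem n t S ∧ #S = SENumber n t :=
  Nat.sInf_mem (s := {m | ∃ S, IsSESystem n t S ∧ #S = m})
    ⟨_, _, isSESystem_powersetCard htn, rfl⟩

theorem stmt18 (n t : ℕ) (ht : 0 < t) (htn : t + 1 < n) :
    (SENumber n t : ℝ) ≥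
      (n.choose (t + 1) : ℝ) / ((n : ℝ) - t - (t : ℝ) / (n : ℝ) + 1 / 2) := by
  obtain ⟨S, hS, hcard⟩ := exists_isSESystem_card_eq_SENumber (by omega : t < n)
  have hcount : 2 * (n.choose (t + 1) : ℝ) + #S ≤ 2 * ((n : ℝ) - t) * #S := by
    rw [← Nat.cast_sub (by omega)]
    exact_mod_cast hS.two_mul_choose_add_card_le ht
  have hn : (0 : ℝ) < n := by exact_mod_cast (by omega : 0 < n)
  have ht_div : (t : ℝ) / n < 1 := by rw [div_lt_one hn]; exact_mod_cast (by omega : t < n)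
  have htn_real : (t : ℝ) + 1 < n := by exact_mod_cast htn
  rw [← hcard, ge_iff_le, div_le_iff₀ (by linarith)]
  nlinarith [(#S).cast_nonneg (α := ℝ)]
end
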